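/- For every predictor class P ⊆ [0,1]^X, every distinguisher class D ⊆ [−1,1]^X, every distribution μ over X, every advantage bound ε > 0, and every failure probability bound δ ∈ (0,1), there exist a nonnegative integer n with n = O( ε^{−2} ( log N_{μ,P}(D, ε/4) + log(2/δ) ) ) and an n-sample learner A such that for every target predictor p* in the symmetric convex hull of P, given n i.i.d. examples from μ_{p*}, A outputs a predictor p with ‖p − p*‖_{μ,D} ≤ ε with probability at least 1 − δ. -/

import Mathlib

open scoped ENNReal Pointwise

noncomputable section

namespace OI

/-- Expectation of a real-valued function under a probability mass function. -/
def pexp {α : Type*} (q : PMF α) (f : α → ℝ) : ℝ := ∑' a, (q a).toReal * f a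

/-- Inner product of two functions w.r.t. the distribution `μ`. -/
def inn {X : Type*} (μ : PMF X) (f g : X → ℝ) : ℝ := pexp μ fun x => f x * g x

/-- Dual Minkowski (semi)norm of `f` w.r.t. the class `F`. -/
def dnorm {X : Type*} (μ : PMF X) (F : Set (X → ℝ)) (f : X → ℝ) : ℝ :=
  sSup ((fun g => |inn μ f g|) '' F)

/-- `C` is an ε-covering of `G` w.r.t. the seminorm defined by `F`. -/
def IsCover {X : Type*} (μ : PMF X) (F G : Set (X → ℝ)) (ε : ℝ) (C : Set (X → ℝ)) : Prop :=
  C ⊆ G ∧ ∀ g ∈ G, ∃ c ∈ C, dnorm μ F (g - c) ≤ ε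

/-- Covering number `N_{μ,F}(G, ε)` (`⊤` if no finite covering exists). -/
def covN {X : Type*} (μ : PMF X) (F G : Set (X → ℝ)) (ε : ℝ) : ℕ∞ :=
  ⨅ (C : Set (X → ℝ)) (_ : IsCover μ F G ε C), C.encard

/-- Base-2 logarithm of an extended natural number (junk value on `⊤`). -/
def elog2 (N : ℕ∞) : ℝ := Real.logb 2 (N.toNat : ℝ)

/-- Bernoulli distribution on `Bool` with mean (the truncation to `[0,1]` of) `r`. -/
def bern (r : ℝ) : PMF Bool := PMF.bernoulli (min (Real.toNNReal r) 1) (min_le_right _ _)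

/-- The distribution `μ_p` of individual-outcome pairs. -/
def exDist {X : Type*} (μ : PMF X) (p : X → ℝ) : PMF (X × Bool) :=
  μ.bind fun x => (bern (p x)).map fun o => (x, o)

/-- `n` i.i.d. samples from `q`. -/
def iid {α : Type*} (q : PMF α) : (n : ℕ) → PMF (Fin n → α)
  | 0 => PMF.pure Fin.elim0
  | n + 1 => (iid q n).bind fun v => q.map fun a => Fin.cons a v

/-- Probability of an event under a PMF. -/
def prob {α : Type*} (q : PMF α) (E : Set α) : ℝ≥0∞ := q.toOuterMeasure E

/-- A (possibly randomized) `n`-sample learner. -/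
abbrev Learner (X : Type*) (n : ℕ) := (Fin n → X × Bool) → PMF (X → ℝ)

/-- Distribution of the learner output on `n` i.i.d. samples from `μ_{p*}`. -/
def outDist {X : Type*} (μ : PMF X) (pstar : X → ℝ) {n : ℕ} (A : Learner X n) :
    PMF (X → ℝ) :=
  (iid (exDist μ pstar) n).bind A

/-- `p` is a predictor, i.e. takes values in `[0,1]`. -/
def Predictor {X : Type*} (p : X → ℝ) : Prop := ∀ x, p x ∈ Set.Icc (0 : ℝ) 1

/-- `d` takes values in `[-1,1]`. -/
def Dist1 {X : Type*} (d : X → ℝ) : Prop := ∀ x, d x ∈ Set.Icc (-1 : ℝ) 1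

/-- The class `[0,1]^X` of all predictors. -/
def allPred (X : Type*) : Set (X → ℝ) := {p | Predictor p}

/-- The learner `A` succeeds for target `pstar`: with probability at least `1 - δ` it outputs
a predictor whose maximum distinguishing advantage w.r.t. `pstar` over `D` is at most `ε`. -/
def Achieves {X : Type*} (μ : PMF X) (D : Set (X → ℝ)) (ε δ : ℝ) (pstar : X → ℝ) {n : ℕ}
    (A : Learner X n) : Prop :=
  ENNReal.ofReal (1 - δ) ≤
    prob (outDist μ pstar A) {p | Predictor p ∧ dnorm μ D (p - pstar) ≤ ε}

/-- The agnostic benchmark `inf_{p' ∈ P} ‖p' - pstar‖_{μ,D}`. -/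
def agTarget {X : Type*} (μ : PMF X) (P D : Set (X → ℝ)) (pstar : X → ℝ) : ℝ :=
  sInf ((fun p' => dnorm μ D (p' - pstar)) '' P)

/-- The learner `A` succeeds agnostically for target `pstar`. -/
def AchievesAg {X : Type*} (μ : PMF X) (P D : Set (X → ℝ)) (ε δ : ℝ) (pstar : X → ℝ) {n : ℕ}
    (A : Learner X n) : Prop :=
  ENNReal.ofReal (1 - δ) ≤
    prob (outDist μ pstar A)
      {p | Predictor p ∧ dnorm μ D (p - pstar) ≤ agTarget μ P D pstar + ε}

/-- Distribution-specific realizable OI learner. -/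
def DSRL {X : Type*} (μ : PMF X) (P D : Set (X → ℝ)) (ε δ : ℝ) (n : ℕ)
    (A : Learner X n) : Prop :=
  ∀ pstar ∈ P, Achieves μ D ε δ pstar A

/-- Distribution-specific agnostic OI learner. -/
def DSAL {X : Type*} (μ : PMF X) (P D : Set (X → ℝ)) (ε δ : ℝ) (n : ℕ)
    (A : Learner X n) : Prop :=
  ∀ pstar : X → ℝ, Predictor pstar → AchievesAg μ P D ε δ pstar A

/-- Distribution-free realizable OI learner. -/
def DFRL {X : Type*} (P D : Set (X → ℝ)) (ε δ : ℝ) (n : ℕ) (A : Learner X n) : Prop :=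
  ∀ μ : PMF X, DSRL μ P D ε δ n A

/-- Distribution-free agnostic OI learner. -/
def DFAL {X : Type*} (P D : Set (X → ℝ)) (ε δ : ℝ) (n : ℕ) (A : Learner X n) : Prop :=
  ∀ μ : PMF X, DSAL μ P D ε δ n A

/-- Sample complexity of distribution-specific realizable OI. -/
def SAMPDSR {X : Type*} (μ : PMF X) (P D : Set (X → ℝ)) (ε δ : ℝ) : ℕ∞ :=
  ⨅ (n : ℕ) (_ : ∃ A : Learner X n, DSRL μ P D ε δ n A), (n : ℕ∞)

/-- Sample complexity of distribution-specific agnostic OI. -/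
def SAMPDSA {X : Type*} (μ : PMF X) (P D : Set (X → ℝ)) (ε δ : ℝ) : ℕ∞ :=
  ⨅ (n : ℕ) (_ : ∃ A : Learner X n, DSAL μ P D ε δ n A), (n : ℕ∞)

/-- Sample complexity of distribution-free realizable OI. -/
def SAMPDFR {X : Type*} (P D : Set (X → ℝ)) (ε δ : ℝ) : ℕ∞ :=
  ⨅ (n : ℕ) (_ : ∃ A : Learner X n, DFRL P D ε δ n A), (n : ℕ∞)

/-- Sample complexity of distribution-free agnostic OI. -/
def SAMPDFA {X : Type*} (P D : Set (X → ℝ)) (ε δ : ℝ) : ℕ∞ :=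
  ⨅ (n : ℕ) (_ : ∃ A : Learner X n, DFAL P D ε δ n A), (n : ℕ∞)

/-- The points `x 0, …, x (n-1)` are `γ`-fat shattered by `F`. -/
def Shatters {X : Type*} (F : Set (X → ℝ)) (γ : ℝ) {n : ℕ} (x : Fin n → X) : Prop :=
  ∃ r : Fin n → ℝ, ∀ b : Fin n → Bool, ∃ f ∈ F,
    ∀ i, γ ≤ (if b i then (1 : ℝ) else -1) * (f (x i) - r i)

/-- The `γ`-fat-shattering dimension of `F`. -/
def fatDim {X : Type*} (F : Set (X → ℝ)) (γ : ℝ) : ℕ∞ :=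
  ⨆ (n : ℕ) (_ : ∃ x : Fin n → X, Shatters F γ x), (n : ℕ∞)

end OI

/-!
Fix a finite `ε/4`-cover `C` of `D` in the seminorm `‖·‖_{μ,P}`. From `n` samples `(xᵢ, oᵢ)`
the learner estimates `⟨p*, c⟩_μ` for each `c ∈ C` by `(1/n) ∑ oᵢ c(xᵢ)`, and outputs any
predictor `p` of the symmetric convex hull of `P` whose correlations with every `c ∈ C` match
these estimates to within `ε/4`. By Hoeffding's inequality and a union bound over `C`, all the
estimates are that accurate with probability `≥ 1 - δ` as soon as
`n ≥ 128 ε⁻² ln (2|C|/δ)`; then `p*` itself is a candidate, so `p` exists. For `d ∈ D` with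
`‖d - c‖_{μ,P} ≤ ε/4`,
`|⟨p - p*, d⟩| ≤ |⟨p - p*, c⟩| + |⟨p, d - c⟩| + |⟨p*, d - c⟩| ≤ ε/2 + ε/4 + ε/4`,
because `|⟨h, f⟩| ≤ ‖f‖_{μ,P}` for every `h` in the symmetric convex hull of `P`.
For `ε ≥ 1` no samples are needed: the constant predictor `0` is already `ε`-close.
-/

namespace OI

section Expectation

variable {α β : Type*}

lemma summable_toReal_pmf (q : PMF α) : Summable fun a => (q a).toReal :=
  ENNReal.summable_toReal q.tsum_coe_ne_top

lemma tsum_toReal_pmf (q : PMF α) : ∑' a, (q a).toReal = 1 := by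
  rw [← ENNReal.tsum_toReal_eq q.apply_ne_top, q.tsum_coe, ENNReal.toReal_one]

lemma summable_pexp (q : PMF α) {f : α → ℝ} {B : ℝ} (hf : ∀ a, |f a| ≤ B) :
    Summable fun a => (q a).toReal * f a := by
  refine Summable.of_norm_bounded ((summable_toReal_pmf q).mul_right B) fun a => ?_
  rw [Real.norm_eq_abs, abs_mul, abs_of_nonneg ENNReal.toReal_nonneg]
  exact mul_le_mul_of_nonneg_left (hf a) ENNReal.toReal_nonneg

lemma pexp_const (q : PMF α) (c : ℝ) : pexp q (fun _ => c) = c := by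
  rw [pexp, tsum_mul_right, tsum_toReal_pmf, one_mul]

lemma pexp_const_mul (q : PMF α) (c : ℝ) (f : α → ℝ) :
    pexp q (fun a => c * f a) = c * pexp q f := by
  simp_rw [pexp, mul_left_comm _ c, tsum_mul_left]

lemma pexp_mul_const (q : PMF α) (f : α → ℝ) (c : ℝ) :
    pexp q (fun a => f a * c) = pexp q f * c := by
  simp_rw [pexp, ← mul_assoc, tsum_mul_right]

lemma pexp_add (q : PMF α) {f g : α → ℝ} {B C : ℝ} (hf : ∀ a, |f a| ≤ B)
    (hg : ∀ a, |g a| ≤ C) : pexp q (fun a => f a + g a) = pexp q f + pexp q g := by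
  simp_rw [pexp, mul_add]
  exact (summable_pexp q hf).tsum_add (summable_pexp q hg)

lemma pexp_sub (q : PMF α) {f g : α → ℝ} {B C : ℝ} (hf : ∀ a, |f a| ≤ B)
    (hg : ∀ a, |g a| ≤ C) : pexp q (fun a => f a - g a) = pexp q f - pexp q g := by
  simp_rw [pexp, mul_sub]
  exact (summable_pexp q hf).tsum_sub (summable_pexp q hg)

lemma pexp_nonneg (q : PMF α) {f : α → ℝ} (hf : ∀ a, 0 ≤ f a) : 0 ≤ pexp q f :=
  tsum_nonneg fun a => mul_nonneg ENNReal.toReal_nonneg (hf a)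

lemma pexp_mono (q : PMF α) {f g : α → ℝ} {B C : ℝ} (hf : ∀ a, |f a| ≤ B)
    (hg : ∀ a, |g a| ≤ C) (hfg : ∀ a, f a ≤ g a) : pexp q f ≤ pexp q g :=
  Summable.tsum_le_tsum (fun a => mul_le_mul_of_nonneg_left (hfg a) ENNReal.toReal_nonneg)
    (summable_pexp q hf) (summable_pexp q hg)

lemma abs_pexp_le (q : PMF α) {f : α → ℝ} {B : ℝ} (hf : ∀ a, |f a| ≤ B) :
    |pexp q f| ≤ B := by
  have hB : ∀ _ : α, |B| ≤ |B| := fun _ => le_rfl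
  have hnegB : ∀ _ : α, |-B| ≤ |B| := fun _ => (abs_neg B).le
  rw [abs_le]
  constructor
  · simpa only [pexp_const] using
      pexp_mono q hnegB hf fun a => (abs_le.mp (hf a)).1
  · simpa only [pexp_const] using
      pexp_mono q hf hB fun a => (abs_le.mp (hf a)).2

lemma ofReal_pexp (q : PMF α) {f : α → ℝ} {B : ℝ} (hf0 : ∀ a, 0 ≤ f a)
    (hf : ∀ a, |f a| ≤ B) :
    ENNReal.ofReal (pexp q f) = ∑' a, q a * ENNReal.ofReal (f a) := by
  rw [pexp, ENNReal.ofReal_tsum_of_nonneg (fun a => mul_nonneg ENNReal.toReal_nonneg (hf0 a))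
    (summable_pexp q hf)]
  refine tsum_congr fun a => ?_
  rw [ENNReal.ofReal_mul ENNReal.toReal_nonneg, ENNReal.ofReal_toReal (q.apply_ne_top a)]

lemma pexp_bind_of_nonneg (p : PMF α) (k : α → PMF β) {f : β → ℝ} {B : ℝ}
    (hf0 : ∀ b, 0 ≤ f b) (hf : ∀ b, |f b| ≤ B) :
    pexp (p.bind k) f = pexp p fun a => pexp (k a) f := by
  have hk0 : ∀ a, 0 ≤ pexp (k a) f := fun a => pexp_nonneg (k a) hf0
  rw [← ENNReal.ofReal_eq_ofReal_iff (pexp_nonneg _ hf0) (pexp_nonneg p hk0),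
    ofReal_pexp _ hf0 hf, ofReal_pexp p hk0 fun a => abs_pexp_le (k a) hf]
  simp_rw [ofReal_pexp _ hf0 hf, PMF.bind_apply, ← ENNReal.tsum_mul_right,
    ← ENNReal.tsum_mul_left, mul_assoc]
  exact ENNReal.tsum_comm

lemma pexp_bind (p : PMF α) (k : α → PMF β) {f : β → ℝ} {B : ℝ} (hf : ∀ b, |f b| ≤ B) :
    pexp (p.bind k) f = pexp p fun a => pexp (k a) f := by
  have hB : ∀ _ : β, |B| ≤ |B| := fun _ => le_rfl
  have shift : ∀ q : PMF β, pexp q (fun b => f b + B) = pexp q f + B := fun q => by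
    rw [pexp_add q hf hB, pexp_const]
  -- shifting by `B` makes `f` nonnegative
  have key := pexp_bind_of_nonneg p k (f := fun b => f b + B) (B := 2 * B)
    (fun b => by linarith [(abs_le.mp (hf b)).1])
    (fun b => abs_le.mpr ⟨by linarith [(abs_le.mp (hf b)).1, abs_nonneg (f b), hf b],
      by linarith [(abs_le.mp (hf b)).2, abs_nonneg (f b), hf b]⟩)
  simp_rw [shift] at key
  rw [pexp_add p (fun a => abs_pexp_le (k a) hf) (fun _ => le_refl |B|), pexp_const] at key
  linarith

lemma pexp_pure (a : α) (f : α → ℝ) : pexp (PMF.pure a) f = f a := by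
  rw [pexp, tsum_eq_single a fun b hb => by simp [PMF.pure_apply, hb]]
  simp [PMF.pure_apply]

lemma pexp_map (p : PMF α) (e : α → β) {f : β → ℝ} {B : ℝ} (hf : ∀ b, |f b| ≤ B) :
    pexp (p.map e) f = pexp p fun a => f (e a) := by
  rw [PMF.map, pexp_bind p _ hf]
  simp only [Function.comp_apply, pexp_pure]

lemma pexp_bern {r : ℝ} (hr0 : 0 ≤ r) (hr1 : r ≤ 1) (f : Bool → ℝ) :
    pexp (bern r) f = (1 - r) * f false + r * f true := by
  have hr1' : Real.toNNReal r ≤ 1 := by simpa using Real.toNNReal_le_toNNReal hr1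
  rw [pexp, tsum_bool, bern]
  simp only [PMF.bernoulli_apply, Bool.cond_false, Bool.cond_true, min_eq_left hr1',
    ENNReal.coe_toReal, NNReal.coe_sub hr1', NNReal.coe_one, Real.coe_toNNReal _ hr0]

lemma pexp_iid_prod (q : PMF α) {h : α → ℝ} {B : ℝ} (h0 : ∀ a, 0 ≤ h a)
    (hB : ∀ a, h a ≤ B) (n : ℕ) :
    pexp (iid q n) (fun v => ∏ i, h (v i)) = pexp q h ^ n := by
  have hprod : ∀ m (v : Fin m → α), |∏ i, h (v i)| ≤ B ^ m := fun m v => by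
    rw [abs_of_nonneg (Finset.prod_nonneg fun i _ => h0 _)]
    simpa using Finset.prod_le_prod (s := Finset.univ) (fun i _ => h0 (v i)) (fun i _ => hB (v i))
  induction n with
  | zero => simp [iid, pexp_pure]
  | succ n ih =>
    rw [iid, pexp_bind _ _ (hprod _)]
    simp_rw [pexp_map _ _ (hprod _), Fin.prod_univ_succ, Fin.cons_zero, Fin.cons_succ,
      pexp_mul_const]
    rw [pexp_const_mul, ih, pow_succ']

end Expectation

section Concentration

variable {α β : Type*}

lemma prob_mono (q : PMF α) {E F : Set α} (h : E ⊆ F) : prob q E ≤ prob q F :=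
  q.toOuterMeasure.mono h

lemma prob_union_le (q : PMF α) (E F : Set α) : prob q (E ∪ F) ≤ prob q E + prob q F :=
  MeasureTheory.measure_union_le (μ := q.toOuterMeasure) E F

lemma prob_map (q : PMF α) (e : α → β) (E : Set β) : prob (q.map e) E = prob q (e ⁻¹' E) :=
  PMF.toOuterMeasure_map_apply e q E

lemma ofReal_one_sub_le_prob (q : PMF α) {E : Set α} {δ : ℝ} (hδ : 0 ≤ δ)
    (h : prob q Eᶜ ≤ ENNReal.ofReal δ) : ENNReal.ofReal (1 - δ) ≤ prob q E := by
  have hunion : 1 ≤ prob q E + ENNReal.ofReal δ := by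
    calc (1 : ℝ≥0∞) = prob q (E ∪ Eᶜ) := by
          rw [Set.union_compl_self, prob, PMF.toOuterMeasure_apply, Set.indicator_univ,
            q.tsum_coe]
      _ ≤ prob q E + prob q Eᶜ := prob_union_le q E Eᶜ
      _ ≤ prob q E + ENNReal.ofReal δ := by gcongr
  rw [ENNReal.ofReal_sub _ hδ, ENNReal.ofReal_one]
  exact tsub_le_iff_right.mpr hunion

lemma prob_le_pexp_div (q : PMF α) {h : α → ℝ} {B c : ℝ} (h0 : ∀ a, 0 ≤ h a)
    (hB : ∀ a, |h a| ≤ B) (hc : 0 < c) {E : Set α} (hE : ∀ a ∈ E, c ≤ h a) :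
    prob q E ≤ ENNReal.ofReal (pexp q h / c) := by
  have key : prob q E * ENNReal.ofReal c ≤ ENNReal.ofReal (pexp q h) := by
    rw [ofReal_pexp q h0 hB, prob, PMF.toOuterMeasure_apply, ← ENNReal.tsum_mul_right]
    refine ENNReal.tsum_le_tsum fun a => ?_
    by_cases ha : a ∈ E
    · rw [Set.indicator_of_mem ha]
      exact mul_le_mul_right (ENNReal.ofReal_le_ofReal (hE a ha)) _
    · simp [Set.indicator_of_notMem ha]
  rwa [ENNReal.ofReal_div_of_pos hc, ENNReal.le_div_iff_mul_le (Or.inl (by simpa using hc))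
    (Or.inl ENNReal.ofReal_ne_top)]

/-- Hoeffding's lemma for a centred variable with values in `[-B, B]`. -/
lemma pexp_exp_mul_le (q : PMF α) {g : α → ℝ} {B : ℝ} (hB : 0 < B) (hg : ∀ a, |g a| ≤ B)
    (hmean : pexp q g = 0) (l : ℝ) :
    pexp q (fun a => Real.exp (l * g a)) ≤ Real.exp (l ^ 2 * B ^ 2 / 2) := by
  set s : ℝ := (Real.exp (l * B) - Real.exp (-(l * B))) / (2 * B)
  -- the chord of `exp` over `[-lB, lB]`, evaluated at `l * g a`
  have chord : ∀ a, Real.exp (l * g a) ≤ s * g a + Real.cosh (l * B) := by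
    intro a
    have hga := abs_le.mp (hg a)
    have hw₁ : 0 ≤ (B - g a) / (2 * B) := div_nonneg (by linarith) (by linarith)
    have hw₂ : 0 ≤ (B + g a) / (2 * B) := div_nonneg (by linarith) (by linarith)
    have hconv := convexOn_exp.2 (Set.mem_univ (-(l * B))) (Set.mem_univ (l * B)) hw₁ hw₂
      (by field_simp; ring)
    simp only [smul_eq_mul] at hconv
    rw [show (B - g a) / (2 * B) * -(l * B) + (B + g a) / (2 * B) * (l * B) = l * g a by
      field_simp; ring] at hconv
    refine hconv.trans_eq ?_
    rw [Real.cosh_eq]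
    simp only [s]
    field_simp
    ring
  have hexp : ∀ a, |Real.exp (l * g a)| ≤ Real.exp (|l| * B) := fun a => by
    rw [abs_of_pos (Real.exp_pos _)]
    exact Real.exp_le_exp.mpr ((le_abs_self _).trans (by
      rw [abs_mul]; exact mul_le_mul_of_nonneg_left (hg a) (abs_nonneg l)))
  have hsg : ∀ a, |s * g a| ≤ |s| * B := fun a => by
    rw [abs_mul]; exact mul_le_mul_of_nonneg_left (hg a) (abs_nonneg s)
  have hcosh : ∀ _ : α, |Real.cosh (l * B)| ≤ |Real.cosh (l * B)| := fun _ => le_rfl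
  calc pexp q (fun a => Real.exp (l * g a))
      ≤ pexp q (fun a => s * g a + Real.cosh (l * B)) :=
        pexp_mono q hexp (fun a => (abs_add_le _ _).trans (add_le_add (hsg a) le_rfl)) chord
    _ = Real.cosh (l * B) := by
        rw [pexp_add q hsg hcosh, pexp_const_mul, hmean, pexp_const, mul_zero, zero_add]
    _ ≤ Real.exp (l ^ 2 * B ^ 2 / 2) := by
        rw [show l ^ 2 * B ^ 2 / 2 = (l * B) ^ 2 / 2 by ring]
        exact Real.cosh_le_exp_half_sq _

/-- Hoeffding's inequality, via the Chernoff bound with parameter `t / B²`. -/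
lemma prob_iid_sum_ge_le (q : PMF α) {g : α → ℝ} {B : ℝ} (hB : 0 < B) (hg : ∀ a, |g a| ≤ B)
    (hmean : pexp q g = 0) {t : ℝ} (ht : 0 < t) (n : ℕ) :
    prob (iid q n) {v | n * t ≤ ∑ i, g (v i)} ≤
      ENNReal.ofReal (Real.exp (-n * t ^ 2 / (2 * B ^ 2))) := by
  set l := t / B ^ 2
  have hl : 0 < l := by positivity
  have hexp : ∀ a, Real.exp (l * g a) ≤ Real.exp (l * B) := fun a =>
    Real.exp_le_exp.mpr (mul_le_mul_of_nonneg_left ((le_abs_self _).trans (hg a)) hl.le)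
  have hprod : ∀ v : Fin n → α, |∏ i, Real.exp (l * g (v i))| ≤ Real.exp (l * B) ^ n :=
    fun v => by
      rw [abs_of_pos (Finset.prod_pos fun i _ => Real.exp_pos _)]
      simpa using Finset.prod_le_prod (s := Finset.univ) (fun i _ => (Real.exp_pos _).le)
        (fun i _ => hexp (v i))
  have markov := prob_le_pexp_div (iid q n) (fun v => (Finset.prod_pos fun i _ =>
      Real.exp_pos (l * g (v i))).le) hprod (Real.exp_pos (l * (n * t)))
    (E := {v | n * t ≤ ∑ i, g (v i)}) fun v hv => by
      rw [← Real.exp_sum, ← Finset.mul_sum]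
      exact Real.exp_le_exp.mpr (mul_le_mul_of_nonneg_left hv hl.le)
  rw [pexp_iid_prod q (fun a => (Real.exp_pos _).le) hexp] at markov
  refine markov.trans (ENNReal.ofReal_le_ofReal ?_)
  calc pexp q (fun a => Real.exp (l * g a)) ^ n / Real.exp (l * (n * t))
      ≤ Real.exp (l ^ 2 * B ^ 2 / 2) ^ n / Real.exp (l * (n * t)) := by
        gcongr
        · exact pexp_nonneg q fun a => (Real.exp_pos _).le
        · exact pexp_exp_mul_le q hB hg hmean l
    _ = Real.exp (-n * t ^ 2 / (2 * B ^ 2)) := by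
        rw [← Real.exp_nat_mul, ← Real.exp_sub]
        congr 1
        simp only [l]
        field_simp
        ring

lemma prob_iid_abs_sum_ge_le (q : PMF α) {g : α → ℝ} {B : ℝ} (hB : 0 < B)
    (hg : ∀ a, |g a| ≤ B) (hmean : pexp q g = 0) {t : ℝ} (ht : 0 < t) (n : ℕ) :
    prob (iid q n) {v | n * t ≤ |∑ i, g (v i)|} ≤
      ENNReal.ofReal (2 * Real.exp (-n * t ^ 2 / (2 * B ^ 2))) := by
  have hneg : pexp q (fun a => -g a) = 0 := by
    simpa [hmean] using pexp_const_mul q (-1) g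
  have hsplit : {v : Fin n → α | n * t ≤ |∑ i, g (v i)|} ⊆
      {v | n * t ≤ ∑ i, g (v i)} ∪ {v | n * t ≤ ∑ i, -g (v i)} := fun v hv => by
    rcases le_abs'.mp (show (n : ℝ) * t ≤ |∑ i, g (v i)| from hv) with h | h
    · right; simp only [Set.mem_ofPred_eq, Finset.sum_neg_distrib]; linarith
    · left; exact h
  calc _ ≤ _ := (prob_mono _ hsplit).trans (prob_union_le _ _ _)
    _ ≤ _ := add_le_add (prob_iid_sum_ge_le q hB hg hmean ht n)
        (prob_iid_sum_ge_le q hB (fun a => (abs_neg (g a)).trans_le (hg a)) hneg ht n)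
    _ = _ := by rw [← ENNReal.ofReal_add (Real.exp_pos _).le (Real.exp_pos _).le, ← two_mul]

end Concentration

section InnerProduct

variable {X : Type*} (μ : PMF X)

lemma Predictor.abs_le_one {p : X → ℝ} (hp : Predictor p) (x : X) : |p x| ≤ 1 :=
  abs_le.mpr ⟨by linarith [(hp x).1], (hp x).2⟩

lemma Dist1.abs_le_one {d : X → ℝ} (hd : Dist1 d) (x : X) : |d x| ≤ 1 :=
  abs_le.mpr (hd x)

lemma abs_mul_apply_le {f g : X → ℝ} {A B : ℝ} (hf : ∀ x, |f x| ≤ A) (hg : ∀ x, |g x| ≤ B)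
    (x : X) : |f x * g x| ≤ A * B := by
  rw [abs_mul]
  exact mul_le_mul (hf x) (hg x) (abs_nonneg _) ((abs_nonneg _).trans (hf x))

lemma inn_comm (f g : X → ℝ) : inn μ f g = inn μ g f :=
  congrArg (pexp μ) (funext fun _ => mul_comm _ _)

lemma abs_inn_le {f g : X → ℝ} {A B : ℝ} (hf : ∀ x, |f x| ≤ A) (hg : ∀ x, |g x| ≤ B) :
    |inn μ f g| ≤ A * B :=
  abs_pexp_le μ (abs_mul_apply_le hf hg)

lemma inn_sub_left {p q f : X → ℝ} {A B C : ℝ} (hp : ∀ x, |p x| ≤ A) (hq : ∀ x, |q x| ≤ B)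
    (hf : ∀ x, |f x| ≤ C) : inn μ (p - q) f = inn μ p f - inn μ q f := by
  rw [inn, inn, inn, ← pexp_sub μ (abs_mul_apply_le hp hf) (abs_mul_apply_le hq hf)]
  simp only [Pi.sub_apply, sub_mul]

lemma inn_sub_right {p f g : X → ℝ} {A B C : ℝ} (hp : ∀ x, |p x| ≤ A) (hf : ∀ x, |f x| ≤ B)
    (hg : ∀ x, |g x| ≤ C) : inn μ p (f - g) = inn μ p f - inn μ p g := by
  rw [inn_comm, inn_sub_left μ hf hg hp, inn_comm μ f, inn_comm μ g]

lemma inn_add_smul_left {p q f : X → ℝ} {A B C : ℝ} (hp : ∀ x, |p x| ≤ A)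
    (hq : ∀ x, |q x| ≤ B) (hf : ∀ x, |f x| ≤ C) (a b : ℝ) :
    inn μ (a • p + b • q) f = a * inn μ p f + b * inn μ q f := by
  have hap : ∀ x, |a * (p x * f x)| ≤ |a| * (A * C) := fun x => by
    rw [abs_mul]; exact mul_le_mul_of_nonneg_left (abs_mul_apply_le hp hf x) (abs_nonneg a)
  have hbq : ∀ x, |b * (q x * f x)| ≤ |b| * (B * C) := fun x => by
    rw [abs_mul]; exact mul_le_mul_of_nonneg_left (abs_mul_apply_le hq hf x) (abs_nonneg b)
  rw [inn, inn, inn, ← pexp_const_mul, ← pexp_const_mul, ← pexp_add μ hap hbq]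
  congr 1 with x
  simp only [Pi.add_apply, Pi.smul_apply, smul_eq_mul]
  ring

lemma dnorm_le {F : Set (X → ℝ)} {f : X → ℝ} {a : ℝ} (h : ∀ g ∈ F, |inn μ f g| ≤ a)
    (ha : 0 ≤ a) : dnorm μ F f ≤ a :=
  Real.sSup_le (by rintro _ ⟨g, hg, rfl⟩; exact h g hg) ha

lemma abs_inn_le_dnorm {P : Set (X → ℝ)} (hP : ∀ p ∈ P, Predictor p) {f : X → ℝ} {B : ℝ}
    (hf : ∀ x, |f x| ≤ B) {p : X → ℝ} (hp : p ∈ P) : |inn μ f p| ≤ dnorm μ P f :=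
  le_csSup ⟨B * 1, by rintro _ ⟨g, hg, rfl⟩; exact abs_inn_le μ hf (hP g hg).abs_le_one⟩
    ⟨p, hp, rfl⟩

variable {P : Set (X → ℝ)}

lemma abs_le_one_of_mem_convexHull (hP : ∀ p ∈ P, Predictor p) {p : X → ℝ}
    (hp : p ∈ convexHull ℝ (P ∪ -P)) (x : X) : |p x| ≤ 1 := by
  have hsub : P ∪ -P ⊆ Set.Icc (-1) 1 := by
    rintro q (hq | hq) <;> refine ⟨fun y => ?_, fun y => ?_⟩
    all_goals first
      | have := hP q hq y
      | have := hP (-q) hq y; simp only [Pi.neg_apply] at this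
    all_goals simp only [Pi.neg_apply, Pi.one_apply]; linarith [this.1, this.2]
  have := convexHull_min hsub (convex_Icc _ _) hp
  exact abs_le.mpr ⟨this.1 x, this.2 x⟩

lemma abs_inn_le_dnorm_of_mem_convexHull (hP : ∀ p ∈ P, Predictor p) {f : X → ℝ} {B : ℝ}
    (hf : ∀ x, |f x| ≤ B) {p : X → ℝ} (hp : p ∈ convexHull ℝ (P ∪ -P)) :
    |inn μ p f| ≤ dnorm μ P f := by
  set S := {p ∈ convexHull ℝ (P ∪ -P) | |inn μ p f| ≤ dnorm μ P f}
  have hsub : P ∪ -P ⊆ S := by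
    rintro q (hq | hq)
    · refine ⟨subset_convexHull ℝ _ (Or.inl hq), ?_⟩
      rw [inn_comm]
      exact abs_inn_le_dnorm μ hP hf hq
    · refine ⟨subset_convexHull ℝ _ (Or.inr hq), ?_⟩
      have hneg : inn μ q f = -inn μ (-q) f := by
        rw [inn, inn, ← neg_one_mul, ← pexp_const_mul]
        simp only [Pi.neg_apply, neg_mul, one_mul, neg_neg]
      rw [hneg, abs_neg, inn_comm]
      exact abs_inn_le_dnorm μ hP hf hq
  have hS : Convex ℝ S := by
    rintro q ⟨hq, hqf⟩ r ⟨hr, hrf⟩ a b ha hb hab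
    refine ⟨convex_convexHull ℝ _ hq hr ha hb hab, ?_⟩
    rw [inn_add_smul_left μ (abs_le_one_of_mem_convexHull hP hq)
      (abs_le_one_of_mem_convexHull hP hr) hf]
    calc |a * inn μ q f + b * inn μ r f| ≤ a * |inn μ q f| + b * |inn μ r f| :=
          (abs_add_le _ _).trans_eq (by rw [abs_mul, abs_mul, abs_of_nonneg ha, abs_of_nonneg hb])
      _ ≤ a * dnorm μ P f + b * dnorm μ P f := by gcongr
      _ = dnorm μ P f := by rw [← add_mul, hab, one_mul]
  exact (convexHull_min hsub hS hp).2

end InnerProduct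

section Covering

variable {X : Type*} {μ : PMF X} {F G : Set (X → ℝ)} {η : ℝ}

lemma exists_finset_isCover_of_covN_ne_top (h : covN μ F G η ≠ ⊤) :
    ∃ C : Finset (X → ℝ), IsCover μ F G η C ∧ covN μ F G η = C.card := by
  rw [covN, iInf_subtype'] at h ⊢
  have : Nonempty {C // IsCover μ F G η C} := by
    by_contra hempty
    have := not_nonempty_iff.mp hempty
    exact h (iInf_of_empty _)
  obtain ⟨⟨C, hC⟩, hmin : C.encard = _⟩ := ciInf_mem fun C : {C // IsCover μ F G η C} => C.1.encard
  have hfin : C.Finite := Set.encard_ne_top_iff.mp (hmin ▸ h)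
  refine ⟨hfin.toFinset, by rwa [hfin.coe_toFinset], ?_⟩
  rw [← hmin, hfin.encard_eq_coe_toFinset_card]

lemma IsCover.nonempty {C : Set (X → ℝ)} (hC : IsCover μ F G η C) (hG : G.Nonempty) :
    C.Nonempty :=
  let ⟨_, hg⟩ := hG
  let ⟨c, hc, _⟩ := hC.2 _ hg
  ⟨c, hc⟩

end Covering

section Learner

variable {X : Type*} (μ : PMF X) (P : Set (X → ℝ)) (C : Finset (X → ℝ)) (η : ℝ)

def outcomeTimes (d : X → ℝ) (z : X × Bool) : ℝ := if z.2 then d z.1 else 0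

lemma abs_outcomeTimes_le {d : X → ℝ} (hd : ∀ x, |d x| ≤ 1) (z : X × Bool) :
    |outcomeTimes d z| ≤ 1 := by
  unfold outcomeTimes
  split_ifs
  exacts [hd _, by simp]

lemma pexp_outcomeTimes {p d : X → ℝ} (hp : Predictor p) (hd : ∀ x, |d x| ≤ 1) :
    pexp (exDist μ p) (outcomeTimes d) = inn μ p d := by
  rw [exDist, pexp_bind μ _ (abs_outcomeTimes_le hd)]
  refine congrArg (pexp μ) (funext fun x => ?_)
  rw [pexp_map _ _ (abs_outcomeTimes_le hd), pexp_bern (hp x).1 (hp x).2]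
  simp [outcomeTimes, mul_comm]

def Fits {n : ℕ} (v : Fin n → X × Bool) (p : X → ℝ) : Prop :=
  ∀ d ∈ C, |∑ i, outcomeTimes d (v i) - n * inn μ p d| ≤ n * η

open Classical in
def fitPredictor {n : ℕ} (v : Fin n → X × Bool) : X → ℝ :=
  if h : ∃ p ∈ convexHull ℝ (P ∪ -P), Predictor p ∧ Fits μ C η v p then h.choose else 0

def fitLearner (n : ℕ) : Learner X n := fun v => PMF.pure (fitPredictor μ P C η v)

variable {μ P C η}

lemma fitPredictor_spec {n : ℕ} {v : Fin n → X × Bool}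
    (h : ∃ p ∈ convexHull ℝ (P ∪ -P), Predictor p ∧ Fits μ C η v p) :
    fitPredictor μ P C η v ∈ convexHull ℝ (P ∪ -P) ∧ Predictor (fitPredictor μ P C η v) ∧
      Fits μ C η v (fitPredictor μ P C η v) := by
  rw [fitPredictor, dif_pos h]
  exact h.choose_spec

lemma abs_inn_sub_le_of_fits {n : ℕ} (hn : 0 < n) {v : Fin n → X × Bool} {p q : X → ℝ}
    (hp : Fits μ C η v p) (hq : Fits μ C η v q) {c : X → ℝ} (hc : c ∈ C) :
    |inn μ p c - inn μ q c| ≤ 2 * η := by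
  have hn' : (0 : ℝ) < n := Nat.cast_pos.mpr hn
  set S := ∑ i, outcomeTimes c (v i)
  have : n * |inn μ p c - inn μ q c| ≤ n * (2 * η) :=
    calc n * |inn μ p c - inn μ q c| = |(S - n * inn μ q c) - (S - n * inn μ p c)| := by
          rw [← abs_of_pos hn', ← abs_mul, abs_of_pos hn']; ring_nf
      _ ≤ |S - n * inn μ q c| + |S - n * inn μ p c| := abs_sub _ _
      _ ≤ n * (2 * η) := by linarith [hp c hc, hq c hc]
  exact le_of_mul_le_mul_left this hn'

variable {D : Set (X → ℝ)} (hD : ∀ d ∈ D, Dist1 d)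
include hD

lemma prob_not_fits_le {p : X → ℝ} (hp : Predictor p) (hC : ↑C ⊆ D) (hη : 0 < η) (n : ℕ) :
    prob (iid (exDist μ p) n) {v | ¬ Fits μ C η v p} ≤
      ENNReal.ofReal (C.card * (2 * Real.exp (-n * η ^ 2 / 8))) := by
  set g : (X → ℝ) → X × Bool → ℝ := fun d z => outcomeTimes d z - inn μ p d
  have hg : ∀ d ∈ C, ∀ z, |g d z| ≤ 2 := fun d hd z => by
    have hd1 := (hD d (hC hd)).abs_le_one
    have := abs_inn_le μ hp.abs_le_one hd1
    exact (abs_sub _ _).trans (by linarith [abs_outcomeTimes_le hd1 z])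
  have hmean : ∀ d ∈ C, pexp (exDist μ p) (g d) = 0 := fun d hd => by
    have hd1 := (hD d (hC hd)).abs_le_one
    rw [pexp_sub _ (abs_outcomeTimes_le hd1) (fun _ => le_refl |inn μ p d|),
      pexp_outcomeTimes μ hp hd1, pexp_const, sub_self]
  have hsub : {v : Fin n → X × Bool | ¬ Fits μ C η v p} ⊆
      ⋃ d ∈ C, {v | n * η ≤ |∑ i, g d (v i)|} := by
    intro v hv
    simp only [Fits, not_forall, not_le, Set.mem_ofPred_eq] at hv
    obtain ⟨d, hd, hlt⟩ := hv
    refine Set.mem_biUnion hd (le_of_lt (show (n : ℝ) * η < |∑ i, g d (v i)| from ?_))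
    simpa [g, Finset.sum_sub_distrib] using hlt
  calc _ ≤ _ := prob_mono _ hsub
    _ ≤ ∑ d ∈ C, prob (iid (exDist μ p) n) {v | n * η ≤ |∑ i, g d (v i)|} :=
        MeasureTheory.measure_biUnion_finset_le (μ := (iid (exDist μ p) n).toOuterMeasure) C _
    _ ≤ ∑ _d ∈ C, ENNReal.ofReal (2 * Real.exp (-n * η ^ 2 / 8)) := by
        refine Finset.sum_le_sum fun d hd => ?_
        have := prob_iid_abs_sum_ge_le _ two_pos (hg d hd) (hmean d hd) hη n
        norm_num at this ⊢
        exact this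
    _ = _ := by
        rw [Finset.sum_const, nsmul_eq_mul, ← ENNReal.ofReal_natCast,
          ← ENNReal.ofReal_mul (Nat.cast_nonneg _)]

variable (hP : ∀ p ∈ P, Predictor p)
include hP

lemma dnorm_sub_le_of_isCover {ε' : ℝ} (hC : IsCover μ P D η C) {p q : X → ℝ}
    (hp : p ∈ convexHull ℝ (P ∪ -P)) (hq : q ∈ convexHull ℝ (P ∪ -P))
    (hpq : ∀ c ∈ C, |inn μ p c - inn μ q c| ≤ ε') (h0 : 0 ≤ ε' + 2 * η) :
    dnorm μ D (p - q) ≤ ε' + 2 * η := by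
  have hp1 := abs_le_one_of_mem_convexHull hP hp
  have hq1 := abs_le_one_of_mem_convexHull hP hq
  refine dnorm_le μ (fun g hg => ?_) h0
  obtain ⟨c, hc, hgc⟩ := hC.2 g hg
  have hcD := hC.1 hc
  have hg1 := (hD g hg).abs_le_one
  have hc1 := (hD c hcD).abs_le_one
  have hgc2 : ∀ x, |(g - c) x| ≤ 1 + 1 := fun x =>
    (abs_sub _ _).trans (add_le_add (hg1 x) (hc1 x))
  have hsplit : inn μ (p - q) g =
      (inn μ p c - inn μ q c) + inn μ p (g - c) - inn μ q (g - c) := by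
    rw [inn_sub_left μ hp1 hq1 hg1, inn_sub_right μ hp1 hg1 hc1, inn_sub_right μ hq1 hg1 hc1]
    ring
  have hpgc := (abs_inn_le_dnorm_of_mem_convexHull μ hP hgc2 hp).trans hgc
  have hqgc := (abs_inn_le_dnorm_of_mem_convexHull μ hP hgc2 hq).trans hgc
  rw [hsplit]
  calc _ ≤ |inn μ p c - inn μ q c| + |inn μ p (g - c)| + |inn μ q (g - c)| :=
        (abs_sub _ _).trans (add_le_add (abs_add_le _ _) le_rfl)
    _ ≤ ε' + 2 * η := by linarith [hpq c (Finset.mem_coe.mp hc)]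

lemma achieves_fitLearner {ε δ : ℝ} (hε : 0 < ε) (hδ : 0 ≤ δ) (hC : IsCover μ P D (ε / 4) C)
    {n : ℕ} (hn : 0 < n) (hfail : C.card * (2 * Real.exp (-n * (ε / 4) ^ 2 / 8)) ≤ δ)
    {pstar : X → ℝ} (hhull : pstar ∈ convexHull ℝ (P ∪ -P)) (hpstar : Predictor pstar) :
    Achieves μ D ε δ pstar (fitLearner μ P C (ε / 4) n) := by
  have hgood : ∀ v, Fits μ C (ε / 4) v pstar → Predictor (fitPredictor μ P C (ε / 4) v) ∧
      dnorm μ D (fitPredictor μ P C (ε / 4) v - pstar) ≤ ε := fun v hv => by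
    obtain ⟨hhull', hpred', hfits'⟩ := fitPredictor_spec ⟨pstar, hhull, hpstar, hv⟩
    refine ⟨hpred', ?_⟩
    have := dnorm_sub_le_of_isCover hD hP hC hhull' hhull
      (fun c hc => abs_inn_sub_le_of_fits hn hfits' hv hc) (by positivity)
    linarith
  refine (ofReal_one_sub_le_prob _ hδ ?_).trans_eq (prob_map _ _ _).symm
  refine (prob_mono _ fun v hv => ?_).trans
    ((prob_not_fits_le hD hpstar hC.1 (by positivity) n).trans (ENNReal.ofReal_le_ofReal hfail))
  exact fun hfits => hv (hgood v hfits)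

end Learner

lemma exists_sampleSize {ε δ : ℝ} (hε : 0 < ε) (hε1 : ε < 1) (hδ : 0 < δ) (hδ1 : δ < 1)
    {N : ℕ} (hN : 0 < N) :
    ∃ n : ℕ, 0 < n ∧
      (n : ℝ) ≤ 100 * ε⁻¹ ^ 2 * (Real.logb 2 N + Real.logb 2 (2 / δ)) ∧
      N * (2 * Real.exp (-n * (ε / 4) ^ 2 / 8)) ≤ δ := by
  set L := Real.logb 2 N + Real.logb 2 (2 / δ)
  have hN1 : (1 : ℝ) ≤ N := by exact_mod_cast hN
  have hlog2 : 0 < Real.log 2 := Real.log_pos one_lt_two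
  have hL : 1 ≤ L := by
    have h1 : 0 ≤ Real.logb 2 N := Real.logb_nonneg one_lt_two hN1
    have h2 : 1 ≤ Real.logb 2 (2 / δ) := by
      rw [Real.le_logb_iff_rpow_le one_lt_two (by positivity), Real.rpow_one,
        le_div_iff₀ hδ]
      linarith
    linarith
  have hεL : 1 ≤ ε⁻¹ ^ 2 * L := one_le_mul_of_one_le_of_one_le
    (one_le_pow₀ ((one_le_inv₀ hε).mpr hε1.le)) hL
  -- `128 = 2 · 2² · 4²`: Hoeffding with range bound `2` and accuracy `ε / 4`
  have hlogL : Real.log (2 * N / δ) = Real.log 2 * L := by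
    rw [show 2 * (N : ℝ) / δ = N * (2 / δ) by ring, Real.log_mul (by positivity) (by positivity)]
    simp only [L, Real.logb]
    field_simp
  set y := 128 * ε⁻¹ ^ 2 * (Real.log 2 * L)
  have hy : 0 < y := by positivity
  refine ⟨⌈y⌉₊, Nat.ceil_pos.mpr hy, ?_, ?_⟩
  · have := Real.log_two_lt_d9
    have := Nat.ceil_lt_add_one hy.le
    nlinarith
  · have hexp : Real.exp (-⌈y⌉₊ * (ε / 4) ^ 2 / 8) ≤ δ / (2 * N) := by
      calc Real.exp (-⌈y⌉₊ * (ε / 4) ^ 2 / 8) ≤ Real.exp (-Real.log (2 * N / δ)) := by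
            refine Real.exp_le_exp.mpr ?_
            have hny := mul_le_mul_of_nonneg_right (Nat.le_ceil y) (sq_nonneg ε)
            have hyε : y * ε ^ 2 = 128 * (Real.log 2 * L) := by simp only [y]; field_simp
            rw [hlogL]
            nlinarith
        _ = δ / (2 * N) := by rw [Real.exp_neg, Real.exp_log (by positivity), inv_div]
    calc (N : ℝ) * (2 * Real.exp (-⌈y⌉₊ * (ε / 4) ^ 2 / 8)) ≤ N * (2 * (δ / (2 * N))) := by
          gcongr
      _ = δ := by field_simp

lemma achieves_pure_zero {X : Type*} {μ : PMF X} {D : Set (X → ℝ)} (hD : ∀ d ∈ D, Dist1 d)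
    {ε δ : ℝ} (hε : 1 ≤ ε) (hδ : 0 ≤ δ) {pstar : X → ℝ} (hpstar : Predictor pstar) {n : ℕ} :
    Achieves μ D ε δ pstar (n := n) fun _ => PMF.pure 0 := by
  have hzero : (0 : X → ℝ) ∈ {p | Predictor p ∧ dnorm μ D (p - pstar) ≤ ε} := by
    refine ⟨fun _ => ⟨le_rfl, zero_le_one⟩, dnorm_le μ (fun d hd => ?_) (by linarith)⟩
    have := abs_inn_le μ (f := 0 - pstar) (fun x => by simpa using hpstar.abs_le_one x)
      (hD d hd).abs_le_one
    linarith
  rw [Achieves, outDist, PMF.bind_const, prob, PMF.toOuterMeasure_pure_apply, if_pos hzero]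
  exact ENNReal.ofReal_le_one.mpr (by linarith)

end OI

open OI

/-- if the target predictor lies in the symmetric convex hull of `P`, then
`n = O(ε⁻²(log N_{μ,P}(D,ε/4) + log(2/δ)))` samples suffice to output a predictor `p` with
`‖p − p*‖_{μ,D} ≤ ε` with probability at least `1 − δ`. -/
theorem statement_14 :
    ∃ c : ℝ, 0 < c ∧
      ∀ (X : Type) (_ : Nonempty X) (μ : PMF X) (P D : Set (X → ℝ)),
        P.Nonempty → (∀ p ∈ P, Predictor p) →
        D.Nonempty → (∀ d ∈ D, Dist1 d) →
        ∀ ε δ : ℝ, 0 < ε → δ ∈ Set.Ioo (0 : ℝ) 1 →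
          covN μ P D (ε / 4) ≠ ⊤ →
            ∃ n : ℕ,
              (n : ℝ) ≤ c * ε⁻¹ ^ 2 *
                (elog2 (covN μ P D (ε / 4)) + Real.logb 2 (2 / δ)) ∧
              ∃ A : Learner X n, ∀ pstar ∈ convexHull ℝ (P ∪ -P), Predictor pstar →
                Achieves μ D ε δ pstar A := by
  refine ⟨100, by norm_num, ?_⟩
  intro X _ μ P D _ hP hDne hD ε δ hε ⟨hδ0, hδ1⟩ hcov
  obtain ⟨C, hC, hCcard⟩ := exists_finset_isCover_of_covN_ne_top hcov
  rw [hCcard, elog2, ENat.toNat_natCast]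
  have hCpos : 0 < C.card := Finset.card_pos.mpr (by exact_mod_cast hC.nonempty hDne)
  rcases le_or_gt 1 ε with hε1 | hε1
  · refine ⟨0, ?_, fun _ => PMF.pure 0, fun pstar _ hpstar =>
      achieves_pure_zero hD hε1 hδ0.le hpstar⟩
    have : 0 ≤ Real.logb 2 C.card := Real.logb_nonneg one_lt_two (by exact_mod_cast hCpos)
    have : 0 ≤ Real.logb 2 (2 / δ) :=
      Real.logb_nonneg one_lt_two ((one_le_div₀ hδ0).mpr (by linarith))
    push_cast
    positivity
  · obtain ⟨n, hn, hnle, hfail⟩ := exists_sampleSize hε hε1 hδ0 hδ1 hCpos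
    exact ⟨n, hnle, fitLearner μ P C (ε / 4) n, fun pstar hhull hpstar =>
      achieves_fitLearner hD hP hε hδ0.le hC hn hfail hhull hpstar⟩
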